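/- The self-dual canonical supercommutation relations (SSR) algebra over h is *-isomorphic to the canonical supercommutation relations (CSR) algebra over the subspace Ph; an explicit *-isomorphism χ is determined by χ(B†(f)) = a†(Pf) − a(γJ(1−P)f) for all f ∈ h. -/
import Mathlib


noncomputable section
open scoped InnerProductSpace

/-- A ℤ₂-graded complex Hilbert space `h` with Klein operator `γ`, an even
conjugation `J` and an even orthogonal projection `P` (onto the particle space)
satisfying `JP = (1-P)J`.  This is the one-particle setting for neutral
particles of the paper. -/
structure NeutralSetup (h : Type) [NormedAddCommGroup h] [InnerProductSpace ℂ h]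
    [CompleteSpace h] where
  /-- the Klein operator `γ = P₀ - P₁` of the ℤ₂-grading -/
  γ : h →L[ℂ] h
  γ_invol : γ ∘L γ = 1
  γ_sa : ∀ v w : h, ⟪γ v, w⟫_ℂ = ⟪v, γ w⟫_ℂ
  /-- the even conjugation `J` (antilinear, norm preserving, involutive) -/
  J : h → h
  J_add : ∀ v w : h, J (v + w) = J v + J w
  J_smul : ∀ (c : ℂ) (v : h), J (c • v) = (starRingEnd ℂ c) • J v
  J_norm : ∀ v : h, ‖J v‖ = ‖v‖
  J_invol : ∀ v : h, J (J v) = v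
  J_even : ∀ v : h, J (γ v) = γ (J v)
  /-- the even orthogonal projection `P` onto the particle subspace -/
  P : h →L[ℂ] h
  P_idem : P ∘L P = P
  P_sa : ∀ v w : h, ⟪P v, w⟫_ℂ = ⟪v, P w⟫_ℂ
  P_even : P ∘L γ = γ ∘L P
  JP : ∀ v : h, J (P v) = (1 - P) (J v)

namespace NeutralSetup

variable {h : Type} [NormedAddCommGroup h] [InnerProductSpace ℂ h] [CompleteSpace h]

/-- the operator `q = P - γ(1-P)` -/
def q (S : NeutralSetup h) : h →L[ℂ] h := S.P - S.γ ∘L (1 - S.P)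

/-- a vector is homogeneous of degree `d` if `γ f = (-1)^d f`. -/
def Homog (S : NeutralSetup h) (d : ℕ) (f : h) : Prop := S.γ f = ((-1 : ℂ) ^ d) • f

/-- an operator is homogeneous of degree `d` if `γ X γ = (-1)^d X`. -/
def HomogOp (S : NeutralSetup h) (d : ℕ) (X : h →L[ℂ] h) : Prop :=
  S.γ ∘L X ∘L S.γ = ((-1 : ℂ) ^ d) • X

/-- the grading involution `ε` on operators: it multiplies the odd-odd block by `-1`;
for `X = Σ λₙ fₙ(gₙ,·)` with homogeneous `fₙ, gₙ` this is `Σ (-1)^{deg fₙ · deg gₙ} λₙ fₙ(gₙ,·)`. -/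
def eps (S : NeutralSetup h) (X : h →L[ℂ] h) : h →L[ℂ] h :=
  X - (1 / 2 : ℂ) • ((1 - S.γ) ∘L X ∘L (1 - S.γ))

/-- the map `X ↦ qJ ε(X)* qJ`. -/
def dual (S : NeutralSetup h) (X : h →L[ℂ] h) : h → h :=
  fun v => S.q (S.J ((ContinuousLinearMap.adjoint (S.eps X)) (S.q (S.J v))))

/-- self-duality: `X = qJ ε(X)* qJ`. -/
def SelfDual (S : NeutralSetup h) (X : h →L[ℂ] h) : Prop := ∀ v : h, X v = S.dual X v

end NeutralSetup

/-- A family of elements of a `ℂ`-star-algebra `A` satisfying the defining relations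
of the SSR algebra (self-dual canonical supercommutation relations) over `h`:
`B†` is linear, `B†(f) = B(qf)*`, `[B(f₁), B†(f₂)]ₛ = (f₁,f₂)·1` (for homogeneous
`f₁, f₂`, with the supercommutator sign given by the degrees), and the neutrality
relation `B(f) = B†(qJf)`. -/
structure SSRGens {h : Type} [NormedAddCommGroup h] [InnerProductSpace ℂ h]
    [CompleteSpace h] (S : NeutralSetup h)
    (A : Type) [Ring A] [Algebra ℂ A] [StarRing A] [StarModule ℂ A] where
  Bd : h → A
  B : h → A
  linear : ∀ (c₁ c₂ : ℂ) (f₁ f₂ : h), Bd (c₁ • f₁ + c₂ • f₂) = c₁ • Bd f₁ + c₂ • Bd f₂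
  star_rel : ∀ f : h, Bd f = star (B (S.q f))
  sComm : ∀ (f₁ f₂ : h) (d₁ d₂ : ℕ), S.Homog d₁ f₁ → S.Homog d₂ f₂ →
    B f₁ * Bd f₂ - ((-1 : ℂ) ^ (d₁ * d₂)) • (Bd f₂ * B f₁) = algebraMap ℂ A ⟪f₁, f₂⟫_ℂ
  neutral : ∀ f : h, B f = Bd (S.q (S.J f))

/-- A family of elements of a `ℂ`-star-algebra `A` satisfying the defining relations
of the CSR algebra (canonical supercommutation relations) over `h̃ = Ph ⊆ h`:
creation operators `ad` (linear, factoring through `P`), annihilation operators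
`an = star ∘ ad`, the supercommutation relation
`[a(f̃₁), a†(f̃₂)]ₛ = (f̃₁,f̃₂)·1` and `[a(f̃₁), a(f̃₂)]ₛ = 0`. -/
structure CSRGens {h : Type} [NormedAddCommGroup h] [InnerProductSpace ℂ h]
    [CompleteSpace h] (S : NeutralSetup h)
    (A : Type) [Ring A] [Algebra ℂ A] [StarRing A] [StarModule ℂ A] where
  ad : h → A
  an : h → A
  ad_factor : ∀ f : h, ad f = ad (S.P f)
  an_factor : ∀ f : h, an f = an (S.P f)
  linear : ∀ (c₁ c₂ : ℂ) (f₁ f₂ : h), ad (c₁ • f₁ + c₂ • f₂) = c₁ • ad f₁ + c₂ • ad f₂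
  star_rel : ∀ f : h, ad f = star (an f)
  sComm : ∀ (f₁ f₂ : h) (d₁ d₂ : ℕ), S.Homog d₁ f₁ → S.Homog d₂ f₂ →
    an f₁ * ad f₂ - ((-1 : ℂ) ^ (d₁ * d₂)) • (ad f₂ * an f₁)
      = algebraMap ℂ A ⟪S.P f₁, S.P f₂⟫_ℂ
  sComm_an : ∀ (f₁ f₂ : h) (d₁ d₂ : ℕ), S.Homog d₁ f₁ → S.Homog d₂ f₂ →
    an f₁ * an f₂ - ((-1 : ℂ) ^ (d₁ * d₂)) • (an f₂ * an f₁) = 0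

/-- The SSR algebra over `h`: a `ℂ`-star-algebra generated by symbols `B†(f)`, `B(f)`
subject to the SSR relations, universal among all star-algebras carrying such
a family of elements. -/
structure SSRAlgebra {h : Type} [NormedAddCommGroup h] [InnerProductSpace ℂ h]
    [CompleteSpace h] (S : NeutralSetup h) where
  A : Type
  [ringA : Ring A]
  [algA : Algebra ℂ A]
  [starA : StarRing A]
  [smodA : StarModule ℂ A]
  gens : SSRGens S A
  universal : ∀ (C : Type) [Ring C] [Algebra ℂ C] [StarRing C] [StarModule ℂ C]
      (g : SSRGens S C), ∃! φ : A →⋆ₐ[ℂ] C, ∀ f : h, φ (gens.Bd f) = g.Bd f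

attribute [instance] SSRAlgebra.ringA SSRAlgebra.algA SSRAlgebra.starA SSRAlgebra.smodA

/-- The CSR algebra over `h̃ = Ph`: a `ℂ`-star-algebra generated by symbols `a†(f̃)`,
`a(f̃)` subject to the CSR relations, universal among all star-algebras carrying such
a family of elements. -/
structure CSRAlgebra {h : Type} [NormedAddCommGroup h] [InnerProductSpace ℂ h]
    [CompleteSpace h] (S : NeutralSetup h) where
  A : Type
  [ringA : Ring A]
  [algA : Algebra ℂ A]
  [starA : StarRing A]
  [smodA : StarModule ℂ A]
  gens : CSRGens S A
  universal : ∀ (C : Type) [Ring C] [Algebra ℂ C] [StarRing C] [StarModule ℂ C]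
      (g : CSRGens S C), ∃! φ : A →⋆ₐ[ℂ] C, ∀ f : h, φ (gens.ad f) = g.ad f

attribute [instance] CSRAlgebra.ringA CSRAlgebra.algA CSRAlgebra.starA CSRAlgebra.smodA


/-! ### Auxiliary lemmas -/

section Aux

variable {h : Type} [NormedAddCommGroup h] [InnerProductSpace ℂ h] [CompleteSpace h]

namespace NeutralSetup

variable (S : NeutralSetup h)

lemma gg (v : h) : S.γ (S.γ v) = v := by
  have := congrArg (fun T : h →L[ℂ] h => T v) S.γ_invol
  simpa using this

lemma pp (v : h) : S.P (S.P v) = S.P v := by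
  have := congrArg (fun T : h →L[ℂ] h => T v) S.P_idem
  simpa using this

lemma pg (v : h) : S.P (S.γ v) = S.γ (S.P v) := by
  have := congrArg (fun T : h →L[ℂ] h => T v) S.P_even
  simpa using this

lemma j_zero : S.J 0 = 0 := by
  have := S.J_smul 0 0
  simpa using this

lemma j_neg (v : h) : S.J (-v) = -(S.J v) := by
  have := S.J_smul (-1) v
  simpa using this

lemma j_sub (v w : h) : S.J (v - w) = S.J v - S.J w := by
  rw [sub_eq_add_neg, S.J_add, S.j_neg, sub_eq_add_neg]

lemma jp (v : h) : S.J (S.P v) = S.J v - S.P (S.J v) := by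
  simpa [ContinuousLinearMap.sub_apply] using S.JP v

lemma pj (v : h) : S.P (S.J v) = S.J v - S.J (S.P v) := by
  rw [S.jp, sub_sub_cancel]

lemma one_sub_P_apply (v : h) : (1 - S.P) v = v - S.P v := by
  simp [ContinuousLinearMap.sub_apply]

lemma q_apply (v : h) : S.q v = S.P v - S.γ (v - S.P v) := by
  simp [NeutralSetup.q, ContinuousLinearMap.sub_apply, ContinuousLinearMap.comp_apply]

lemma qP (v : h) : S.q (S.P v) = S.P v := by
  rw [S.q_apply, S.pp, sub_self, map_zero, sub_zero]

lemma Pq (v : h) : S.P (S.q v) = S.P v := by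
  rw [S.q_apply, map_sub, S.pp, S.pg, map_sub, S.pp, sub_self, map_zero, sub_zero]

lemma q_sub_Pq (v : h) : S.q v - S.P (S.q v) = -(S.γ (v - S.P v)) := by
  rw [S.Pq, S.q_apply]; abel

/-! homogeneity -/

lemma conj_neg_one_pow (d : ℕ) : (starRingEnd ℂ) ((-1 : ℂ) ^ d) = (-1 : ℂ) ^ d := by
  simp

lemma neg_one_pow_sq (d : ℕ) : ((-1 : ℂ) ^ d) * ((-1 : ℂ) ^ d) = 1 := by
  rw [← pow_add]
  exact Even.neg_one_pow ⟨d, rfl⟩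

lemma homog_P {d : ℕ} {f : h} (hf : S.Homog d f) : S.Homog d (S.P f) := by
  unfold NeutralSetup.Homog at *
  rw [← S.pg, hf, map_smul]

lemma homog_sub_P {d : ℕ} {f : h} (hf : S.Homog d f) : S.Homog d (f - S.P f) := by
  unfold NeutralSetup.Homog at *
  rw [map_sub, hf, ← S.pg, hf, map_smul, smul_sub]

lemma homog_J {d : ℕ} {f : h} (hf : S.Homog d f) : S.Homog d (S.J f) := by
  unfold NeutralSetup.Homog at *
  rw [← S.J_even, hf, S.J_smul, conj_neg_one_pow]

lemma homog_γ {d : ℕ} {f : h} (hf : S.Homog d f) : S.Homog d (S.γ f) := by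
  unfold NeutralSetup.Homog at *
  rw [S.gg, hf, smul_smul, neg_one_pow_sq, one_smul]

lemma homog_neg {d : ℕ} {f : h} (hf : S.Homog d f) : S.Homog d (-f) := by
  unfold NeutralSetup.Homog at *
  rw [map_neg, hf, smul_neg]

/-! the conjugation is antiunitary -/

lemma inner_J_re (x y : h) : (⟪S.J x, S.J y⟫_ℂ).re = (⟪x, y⟫_ℂ).re := by
  have h1 := norm_add_sq (𝕜 := ℂ) (S.J x) (S.J y)
  have h2 := norm_add_sq (𝕜 := ℂ) x y
  rw [← S.J_add, S.J_norm, S.J_norm, S.J_norm] at h1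
  have e1 : RCLike.re ⟪S.J x, S.J y⟫_ℂ = (⟪S.J x, S.J y⟫_ℂ).re := rfl
  have e2 : RCLike.re ⟪x, y⟫_ℂ = (⟪x, y⟫_ℂ).re := rfl
  rw [e1] at h1; rw [e2] at h2
  linarith

lemma inner_J (x y : h) : ⟪S.J x, S.J y⟫_ℂ = ⟪y, x⟫_ℂ := by
  have him : (⟪S.J x, S.J y⟫_ℂ).im = (⟪y, x⟫_ℂ).im := by
    have h3 := S.inner_J_re ((-Complex.I) • x) y
    rw [S.J_smul] at h3
    have hc : (starRingEnd ℂ) (-Complex.I) = Complex.I := by simp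
    rw [hc, inner_smul_left, inner_smul_left] at h3
    simp only [Complex.conj_I, map_neg, Complex.mul_re, Complex.neg_re, Complex.neg_im,
      Complex.I_re, Complex.I_im] at h3
    have h4 : (⟪y, x⟫_ℂ) = (starRingEnd ℂ) ⟪x, y⟫_ℂ := by
      rw [inner_conj_symm]
    rw [h4, Complex.conj_im]
    linarith
  have hre : (⟪S.J x, S.J y⟫_ℂ).re = (⟪y, x⟫_ℂ).re := by
    rw [S.inner_J_re]
    have h4 : (⟪y, x⟫_ℂ) = (starRingEnd ℂ) ⟪x, y⟫_ℂ := by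
      rw [inner_conj_symm]
    rw [h4, Complex.conj_re]
  exact Complex.ext hre him

/-! the key scalar identity -/

lemma scalar_key (f₁ f₂ : h) (d₁ d₂ : ℕ) (h1 : S.Homog d₁ f₁) (h2 : S.Homog d₂ f₂) :
    ⟪S.P f₁, S.P f₂⟫_ℂ
      + ((-1 : ℂ) ^ (d₁ * d₂)) * ⟪S.γ (S.J (f₂ - S.P f₂)), S.J (f₁ - S.P f₁)⟫_ℂ
    = ⟪f₁, f₂⟫_ℂ := by
  set g₁ := f₁ - S.P f₁ with hg₁
  set g₂ := f₂ - S.P f₂ with hg₂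
  have hst : ⟪S.γ (S.J g₂), S.J g₁⟫_ℂ = ((-1 : ℂ) ^ d₂) * ⟪g₁, g₂⟫_ℂ := by
    rw [← S.J_even, S.inner_J, (S.homog_sub_P h2 : S.γ g₂ = _), inner_smul_right]
  have hP2 : ⟪S.P f₁, S.P f₂⟫_ℂ = ⟪f₁, S.P f₂⟫_ℂ := by
    rw [S.P_sa, S.pp]
  have hgg : ⟪g₁, g₂⟫_ℂ = ⟪f₁, f₂⟫_ℂ - ⟪f₁, S.P f₂⟫_ℂ := by
    rw [hg₁, hg₂, inner_sub_left, inner_sub_right, inner_sub_right, S.P_sa f₁ f₂, S.P_sa, S.pp]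
    ring
  have hkey : ((-1 : ℂ) ^ d₁) * ⟪g₁, g₂⟫_ℂ = ((-1 : ℂ) ^ d₂) * ⟪g₁, g₂⟫_ℂ := by
    have := S.γ_sa g₁ g₂
    rw [(S.homog_sub_P h1 : S.γ g₁ = _), (S.homog_sub_P h2 : S.γ g₂ = _),
      inner_smul_left, inner_smul_right, conj_neg_one_pow] at this
    exact this
  have hsgn : ((-1 : ℂ) ^ (d₁ * d₂)) * (((-1 : ℂ) ^ d₂) * ⟪g₁, g₂⟫_ℂ) = ⟪g₁, g₂⟫_ℂ := by
    rcases Nat.even_or_odd d₁ with hd₁ | hd₁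
    · have hs1 : ((-1 : ℂ) ^ (d₁ * d₂)) = 1 := Even.neg_one_pow (hd₁.mul_right d₂)
      rw [hs1, one_mul, ← hkey, Even.neg_one_pow hd₁, one_mul]
    · rcases Nat.even_or_odd d₂ with hd₂ | hd₂
      · rw [Even.neg_one_pow (hd₂.mul_left d₁), Even.neg_one_pow hd₂, one_mul, one_mul]
      · rw [Odd.neg_one_pow (hd₁.mul hd₂), Odd.neg_one_pow hd₂]
        ring
  rw [hst, hsgn, hP2, hgg]
  ring

end NeutralSetup

end Aux


/-! ### Derived lemmas for generator families -/

section GensAux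

variable {h : Type} [NormedAddCommGroup h] [InnerProductSpace ℂ h] [CompleteSpace h]
  {S : NeutralSetup h}
  {A : Type} [Ring A] [Algebra ℂ A] [StarRing A] [StarModule ℂ A]

namespace CSRGens

variable (g : CSRGens S A)

lemma ad_smul (c : ℂ) (x : h) : g.ad (c • x) = c • g.ad x := by
  have := g.linear c 0 x 0
  simpa using this

lemma ad_add (x y : h) : g.ad (x + y) = g.ad x + g.ad y := by
  have := g.linear 1 1 x y
  simpa using this

lemma ad_zero : g.ad 0 = 0 := by
  have := g.ad_smul 0 0
  simpa using this

lemma ad_neg (x : h) : g.ad (-x) = -(g.ad x) := by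
  have := g.ad_smul (-1) x
  simpa using this

lemma an_eq (x : h) : g.an x = star (g.ad x) := by
  rw [g.star_rel, star_star]

lemma an_zero : g.an 0 = 0 := by
  rw [g.an_eq, g.ad_zero, star_zero]

lemma an_neg (x : h) : g.an (-x) = -(g.an x) := by
  rw [g.an_eq, g.ad_neg, star_neg, ← g.an_eq]

lemma an_add (x y : h) : g.an (x + y) = g.an x + g.an y := by
  rw [g.an_eq, g.ad_add, star_add, ← g.an_eq, ← g.an_eq]

lemma an_smul (c : ℂ) (x : h) : g.an (c • x) = (starRingEnd ℂ c) • g.an x := by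
  rw [g.an_eq, g.ad_smul, star_smul, ← g.an_eq]
  rfl

lemma sComm_ad (f₁ f₂ : h) (d₁ d₂ : ℕ) (h1 : S.Homog d₁ f₁) (h2 : S.Homog d₂ f₂) :
    g.ad f₁ * g.ad f₂ - ((-1 : ℂ) ^ (d₁ * d₂)) • (g.ad f₂ * g.ad f₁) = 0 := by
  have h0 := g.sComm_an f₂ f₁ d₂ d₁ h2 h1
  have := congrArg star h0
  rw [star_zero, star_sub, star_mul, star_smul, star_mul, ← g.star_rel, ← g.star_rel] at this
  have hc : star ((-1 : ℂ) ^ (d₂ * d₁)) = ((-1 : ℂ) ^ (d₁ * d₂)) := by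
    rw [Nat.mul_comm d₂ d₁]
    exact NeutralSetup.conj_neg_one_pow (d₁ * d₂)
  rw [hc] at this
  exact this

end CSRGens

namespace SSRGens

variable (g : SSRGens S A)

lemma Bd_smul (c : ℂ) (x : h) : g.Bd (c • x) = c • g.Bd x := by
  have := g.linear c 0 x 0
  simpa using this

lemma Bd_add (x y : h) : g.Bd (x + y) = g.Bd x + g.Bd y := by
  have := g.linear 1 1 x y
  simpa using this

lemma Bd_zero : g.Bd 0 = 0 := by
  have := g.Bd_smul 0 0
  simpa using this

lemma Bd_neg (x : h) : g.Bd (-x) = -(g.Bd x) := by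
  have := g.Bd_smul (-1) x
  simpa using this

lemma star_Bd (x : h) : star (g.Bd x) = g.B (S.q x) := by
  rw [g.star_rel, star_star]

end SSRGens

/-! ### The SSR generator family inside a CSR algebra -/

def csrToSsrGens (S : NeutralSetup h) (g : CSRGens S A) : SSRGens S A where
  Bd f := g.ad (S.P f) - g.an (S.γ (S.J ((1 - S.P) f)))
  B f := g.an (S.P f) + g.ad (S.J ((1 - S.P) f))
  linear := by
    intro c₁ c₂ f₁ f₂
    beta_reduce
    have e1 : S.P (c₁ • f₁ + c₂ • f₂) = c₁ • S.P f₁ + c₂ • S.P f₂ := by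
      simp
    have e2 : S.γ (S.J ((1 - S.P) (c₁ • f₁ + c₂ • f₂)))
        = (starRingEnd ℂ c₁) • S.γ (S.J ((1 - S.P) f₁))
          + (starRingEnd ℂ c₂) • S.γ (S.J ((1 - S.P) f₂)) := by
      rw [map_add, map_smul, map_smul, S.J_add, S.J_smul, S.J_smul, map_add, map_smul, map_smul]
    rw [e1, e2, g.linear, g.an_add, g.an_smul, g.an_smul, Complex.conj_conj, Complex.conj_conj,
      smul_sub, smul_sub]
    abel
  star_rel := by
    intro f
    beta_reduce
    have e1 : (1 - S.P) (S.q f) = -(S.γ (f - S.P f)) := by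
      rw [S.one_sub_P_apply, S.q_sub_Pq]
    rw [star_add, ← g.an_eq, ← g.star_rel, e1, S.Pq, S.j_neg, S.J_even, g.an_neg,
      S.one_sub_P_apply]
    abel
  sComm := by
    intro f₁ f₂ d₁ d₂ h1 h2
    beta_reduce
    rw [S.one_sub_P_apply, S.one_sub_P_apply]
    set a := g.an (S.P f₁) with ha
    set b := g.ad (S.J (f₁ - S.P f₁)) with hb
    set c := g.ad (S.P f₂) with hc
    set d := g.an (S.γ (S.J (f₂ - S.P f₂))) with hd
    set s := ((-1 : ℂ) ^ (d₁ * d₂)) with hs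
    have hss : s * s = 1 := NeutralSetup.neg_one_pow_sq _
    -- homogeneity of the pieces
    have hu₁ : S.Homog d₁ (S.P f₁) := S.homog_P h1
    have hv₁ : S.Homog d₁ (S.J (f₁ - S.P f₁)) := S.homog_J (S.homog_sub_P h1)
    have hu₂ : S.Homog d₂ (S.P f₂) := S.homog_P h2
    have hw₂ : S.Homog d₂ (S.γ (S.J (f₂ - S.P f₂))) := S.homog_γ (S.homog_J (S.homog_sub_P h2))
    -- P fixes the pieces
    have hx₁ : S.P (f₁ - S.P f₁) = 0 := by rw [map_sub, S.pp, sub_self]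
    have hx₂ : S.P (f₂ - S.P f₂) = 0 := by rw [map_sub, S.pp, sub_self]
    have hPv₁ : S.P (S.J (f₁ - S.P f₁)) = S.J (f₁ - S.P f₁) := by
      rw [S.pj, hx₁, S.j_zero, sub_zero]
    have hPw₂ : S.P (S.γ (S.J (f₂ - S.P f₂))) = S.γ (S.J (f₂ - S.P f₂)) := by
      rw [S.pg, S.pj, hx₂, S.j_zero, sub_zero]
    -- the four elementary relations
    have R1 : a * c - s • (c * a) = algebraMap ℂ A ⟪S.P (S.P f₁), S.P (S.P f₂)⟫_ℂ :=
      g.sComm _ _ d₁ d₂ hu₁ hu₂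
    rw [S.pp, S.pp] at R1
    have R2 : a * d - s • (d * a) = 0 := g.sComm_an _ _ d₁ d₂ hu₁ hw₂
    have R3 : b * c - s • (c * b) = 0 := by
      have := g.sComm_ad _ _ d₁ d₂ hv₁ hu₂
      exact this
    have R4 : d * b - s • (b * d)
        = algebraMap ℂ A ⟪S.P (S.γ (S.J (f₂ - S.P f₂))), S.P (S.J (f₁ - S.P f₁))⟫_ℂ := by
      have := g.sComm _ _ d₂ d₁ hw₂ hv₁
      rwa [Nat.mul_comm d₂ d₁, ← hs] at this
    rw [hPv₁, hPw₂] at R4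
    have R4' : s • (d * b) - b * d = s • algebraMap ℂ A ⟪S.γ (S.J (f₂ - S.P f₂)), S.J (f₁ - S.P f₁)⟫_ℂ := by
      rw [← R4, smul_sub, smul_smul, hss, one_smul]
    have expand : (a + b) * (c - d) - s • ((c - d) * (a + b))
        = ((a * c - s • (c * a)) + (b * c - s • (c * b))) - (a * d - s • (d * a))
          + (s • (d * b) - b * d) := by
      simp only [mul_add, add_mul, mul_sub, sub_mul, smul_add, smul_sub]
      abel
    rw [expand, R1, R2, R3, R4']
    have hsc : s • algebraMap ℂ A ⟪S.γ (S.J (f₂ - S.P f₂)), S.J (f₁ - S.P f₁)⟫_ℂ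
        = algebraMap ℂ A (s * ⟪S.γ (S.J (f₂ - S.P f₂)), S.J (f₁ - S.P f₁)⟫_ℂ) := by
      rw [map_mul, Algebra.smul_def]
    rw [hsc, sub_zero, add_zero, ← map_add, S.scalar_key f₁ f₂ d₁ d₂ h1 h2]
  neutral := by
    intro f
    beta_reduce
    have e1 : S.P (S.q (S.J f)) = S.J f - S.J (S.P f) := by
      rw [S.Pq, S.pj]
    have e3 : S.J (S.P (S.J f)) = f - S.P f := by
      rw [S.jp, S.J_invol]
    have e2 : S.γ (S.J ((1 - S.P) (S.q (S.J f)))) = -(S.P f) := by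
      rw [S.one_sub_P_apply, S.q_sub_Pq, S.j_neg, S.J_even, map_neg, S.gg, S.j_sub,
        S.J_invol, e3, sub_sub_cancel]
    rw [e1, e2, g.an_neg, sub_neg_eq_add, S.one_sub_P_apply, S.j_sub]
    abel


/-! ### The CSR generator family inside an SSR algebra -/

def ssrToCsrGens (S : NeutralSetup h) (g : SSRGens S A) : CSRGens S A where
  ad f := g.Bd (S.P f)
  an f := g.B (S.P f)
  ad_factor := by
    intro f; beta_reduce; rw [S.pp]
  an_factor := by
    intro f; beta_reduce; rw [S.pp]
  linear := by
    intro c₁ c₂ f₁ f₂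
    beta_reduce
    have e1 : S.P (c₁ • f₁ + c₂ • f₂) = c₁ • S.P f₁ + c₂ • S.P f₂ := by simp
    rw [e1, g.linear]
  star_rel := by
    intro f
    beta_reduce
    have := g.star_rel (S.P f)
    rwa [S.qP] at this
  sComm := by
    intro f₁ f₂ d₁ d₂ h1 h2
    beta_reduce
    exact g.sComm (S.P f₁) (S.P f₂) d₁ d₂ (S.homog_P h1) (S.homog_P h2)
  sComm_an := by
    intro f₁ f₂ d₁ d₂ h1 h2
    beta_reduce
    have hx : S.P (S.J f₂ - S.P (S.J f₂)) = 0 := by rw [map_sub, S.pp, sub_self]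
    have e2 : S.q (S.J (S.P f₂)) = -(S.γ (S.J f₂ - S.P (S.J f₂))) := by
      rw [S.jp, S.q_apply, hx, sub_zero, zero_sub]
    have hw : S.Homog d₂ (S.γ (S.J f₂ - S.P (S.J f₂))) :=
      S.homog_γ (S.homog_sub_P (S.homog_J h2))
    have hPw : S.P (S.γ (S.J f₂ - S.P (S.J f₂))) = 0 := by
      rw [S.pg, hx, map_zero]
    have hinner : ⟪S.P f₁, S.γ (S.J f₂ - S.P (S.J f₂))⟫_ℂ = 0 := by
      rw [S.P_sa, hPw, inner_zero_right]
    have h0 := g.sComm (S.P f₁) (S.γ (S.J f₂ - S.P (S.J f₂))) d₁ d₂ (S.homog_P h1) hw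
    rw [hinner, map_zero] at h0
    rw [g.neutral (S.P f₂), e2, g.Bd_neg]
    have expand : g.B (S.P f₁) * -(g.Bd (S.γ (S.J f₂ - S.P (S.J f₂))))
          - ((-1 : ℂ) ^ (d₁ * d₂)) • (-(g.Bd (S.γ (S.J f₂ - S.P (S.J f₂)))) * g.B (S.P f₁))
        = -(g.B (S.P f₁) * g.Bd (S.γ (S.J f₂ - S.P (S.J f₂)))
            - ((-1 : ℂ) ^ (d₁ * d₂)) • (g.Bd (S.γ (S.J f₂ - S.P (S.J f₂))) * g.B (S.P f₁))) := by
      simp only [mul_neg, neg_mul, smul_neg]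
      abel
    rw [expand, h0, neg_zero]

end GensAux

/-- **Lemma 1.** The SSR algebra over `h` and the CSR algebra over `h̃ = Ph` are
`*`-isomorphic; an explicit `*`-isomorphism `χ` is determined by
`χ(B†(f)) = a†(Pf) - a(γJ(1-P)f)` for all `f ∈ h`. -/
theorem ssr_star_isomorphic_csr
    (h : Type) [NormedAddCommGroup h] [InnerProductSpace ℂ h] [CompleteSpace h]
    (S : NeutralSetup h) (SSR : SSRAlgebra S) (CSR : CSRAlgebra S) :
    ∃ χ : SSR.A ≃⋆ₐ[ℂ] CSR.A, ∀ f : h,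
      χ (SSR.gens.Bd f) = CSR.gens.ad (S.P f) - CSR.gens.an (S.γ (S.J ((1 - S.P) f))) := by
  obtain ⟨φ, hφ, -⟩ := SSR.universal CSR.A (csrToSsrGens S CSR.gens)
  obtain ⟨ψ, hψ, -⟩ := CSR.universal SSR.A (ssrToCsrGens S SSR.gens)
  obtain ⟨θ, -, hθu⟩ := SSR.universal SSR.A SSR.gens
  obtain ⟨ρ, -, hρu⟩ := CSR.universal CSR.A CSR.gens
  have hφ' : ∀ f : h, φ (SSR.gens.Bd f)
      = CSR.gens.ad (S.P f) - CSR.gens.an (S.γ (S.J ((1 - S.P) f))) := hφ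
  have hψ' : ∀ f : h, ψ (CSR.gens.ad f) = SSR.gens.Bd (S.P f) := hψ
  have hid1 : ∀ a, ψ (φ a) = a := by
    have hcomp : ∀ f : h, (ψ.comp φ) (SSR.gens.Bd f) = SSR.gens.Bd f := by
      intro f
      rw [StarAlgHom.comp_apply, hφ', map_sub, hψ', S.pp]
      rw [CSR.gens.an_eq, map_star, hψ']
      have hx : S.P (f - S.P f) = 0 := by rw [map_sub, S.pp, sub_self]
      have hPg : S.P (S.γ (S.J ((1 - S.P) f))) = S.γ (S.J ((1 - S.P) f)) := by
        rw [S.one_sub_P_apply, S.pg, S.pj, hx, S.j_zero, sub_zero]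
      rw [hPg, SSR.gens.star_Bd]
      have hqg : S.q (S.γ (S.J ((1 - S.P) f))) = S.γ (S.J ((1 - S.P) f)) := by
        rw [S.q_apply, hPg, sub_self, map_zero, sub_zero]
      rw [hqg, SSR.gens.neutral, S.J_even, S.J_invol, S.one_sub_P_apply]
      have hq2 : S.q (S.γ (f - S.P f)) = -(f - S.P f) := by
        rw [S.q_apply, S.pg, hx, map_zero, sub_zero, zero_sub, S.gg]
      rw [hq2, SSR.gens.Bd_neg, sub_neg_eq_add, ← SSR.gens.Bd_add]
      have : S.P f + (f - S.P f) = f := by abel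
      rw [this]
    have e1 := hθu (ψ.comp φ) hcomp
    have e2 := hθu (StarAlgHom.id ℂ SSR.A) (fun f => rfl)
    intro a
    calc ψ (φ a) = (ψ.comp φ) a := rfl
      _ = (StarAlgHom.id ℂ SSR.A) a := by rw [e1.trans e2.symm]
      _ = a := rfl
  have hid2 : ∀ a, φ (ψ a) = a := by
    have hcomp : ∀ f : h, (φ.comp ψ) (CSR.gens.ad f) = CSR.gens.ad f := by
      intro f
      rw [StarAlgHom.comp_apply, hψ', hφ']
      have hx : (1 - S.P) (S.P f) = 0 := by rw [S.one_sub_P_apply, S.pp, sub_self]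
      rw [S.pp, hx, S.j_zero, map_zero, CSR.gens.an_zero, sub_zero, ← CSR.gens.ad_factor]
    have e1 := hρu (φ.comp ψ) hcomp
    have e2 := hρu (StarAlgHom.id ℂ CSR.A) (fun f => rfl)
    intro a
    calc φ (ψ a) = (φ.comp ψ) a := rfl
      _ = (StarAlgHom.id ℂ CSR.A) a := by rw [e1.trans e2.symm]
      _ = a := rfl
  refine ⟨{ toFun := φ, invFun := ψ, left_inv := hid1, right_inv := hid2,
            map_mul' := map_mul φ, map_add' := map_add φ,
            map_smul' := map_smul φ, map_star' := map_star φ }, ?_⟩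
  intro f
  exact hφ' f
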